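/- arXiv:1703.00575 — 2 statements merged into one kernel-verified Lean document; each statement's English description precedes it below -/
import Mathlib

section
/- With B = 2 and the recurrence C_1 = s_1, C_2 = s_1 + s_2, C_i = max(C_{i-2} + U, C_{i-1}) + s_i for i > 2 (unit interval length U ≥ 1): if s_1 = 0, s_{2i} = a_{[2i]} and s_{2i+1} = a_{[2i+1]} where partial sums satisfy ∑_{j=1}^i a_{[2j]} ≤ ∑_{j=1}^i a_{[2j-1]} ≤ U for all i ≤ m, then for all 1 ≤ i ≤ m: C_{2i} = (i-1)U + ∑_{j=1}^{i} a_{[2j-1]} and C_{2i+1} = iU + ∑_{j=1}^{i} a_{[2j]}. -/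
/-!
Let `A i = ∑_{j ≤ i} a[2j-1]` and `B i = ∑_{j ≤ i} a[2j]`. In both recurrence steps the
maximum is attained by its first argument: `C (2i+2)` because `B i ≤ A i`, and `C (2i+3)`
because `A (i+1) ≤ U ≤ U + B i`. So every step adds exactly `U` plus the new job.
-/

open Finset

theorem two_machine_step {U A B x y E O E' O' : ℝ} (k : ℝ)
    (hE : E = (k - 1) * U + A) (hO : O = k * U + B)
    (hB : 0 ≤ B) (hBA : B ≤ A) (hAU : A + x ≤ U)
    (hE' : E' = max (E + U) O + x) (hO' : O' = max (O + U) E' + y) :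
    E' = k * U + (A + x) ∧ O' = (k + 1) * U + (B + y) := by
  have hE'_eq : E' = k * U + (A + x) := by
    rw [hE', hE, hO, max_eq_left (by linarith)]
    ring
  refine ⟨hE'_eq, ?_⟩
  rw [hO', hE'_eq, hO, max_eq_left (by linarith)]
  ring

theorem two_machine_closed_form (U : ℝ) (p q E O : ℕ → ℝ) (n : ℕ) (hq : ∀ j, 0 ≤ q j)
    (hE₁ : E 1 = p 1) (hO₁ : O 1 = U + q 1)
    (hE : ∀ i, 1 ≤ i → i < n → E (i + 1) = max (E i + U) (O i) + p (i + 1))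
    (hO : ∀ i, 1 ≤ i → i < n → O (i + 1) = max (O i + U) (E (i + 1)) + q (i + 1))
    (hpartial : ∀ i, 1 ≤ i → i ≤ n →
      ∑ j ∈ Icc 1 i, q j ≤ ∑ j ∈ Icc 1 i, p j ∧ ∑ j ∈ Icc 1 i, p j ≤ U) :
    ∀ i, 1 ≤ i → i ≤ n →
      E i = ((i : ℝ) - 1) * U + ∑ j ∈ Icc 1 i, p j ∧
      O i = (i : ℝ) * U + ∑ j ∈ Icc 1 i, q j := by
  intro i hi
  induction i, hi using Nat.le_induction with
  | base => intro _; simp [hE₁, hO₁]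
  | succ i hi ih =>
    intro hin
    obtain ⟨hEi, hOi⟩ := ih (by omega)
    have hAU := (hpartial (i + 1) (by omega) hin).2
    rw [sum_Icc_succ_top (by omega)] at hAU ⊢
    rw [sum_Icc_succ_top (by omega)]
    obtain ⟨hE', hO'⟩ := two_machine_step i hEi hOi (sum_nonneg fun j _ => hq j)
      (hpartial i hi (by omega)).1 hAU (hE i hi hin) (hO i hi hin)
    push_cast
    exact ⟨by rw [hE']; ring, hO'⟩

theorem stmt_7_general (m : ℕ) (U : ℝ)
    (a : ℕ → ℝ) (ha : ∀ j, 0 ≤ a j) (s : ℕ → ℝ) (C : ℕ → ℝ)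
    (hs1 : s 1 = 0)
    (hseven : ∀ i, 1 ≤ i → i ≤ m → s (2 * i) = a (2 * i - 1))
    (hsodd : ∀ i, 1 ≤ i → i ≤ m → s (2 * i + 1) = a (2 * i))
    (hC1 : C 1 = s 1) (hC2 : C 2 = s 1 + s 2)
    (hrec : ∀ i, 2 < i → i ≤ 2 * m + 1 → C i = max (C (i - 2) + U) (C (i - 1)) + s i)
    (hpartial : ∀ i, 1 ≤ i → i ≤ m →
      ∑ j ∈ Finset.Icc 1 i, a (2 * j) ≤ ∑ j ∈ Finset.Icc 1 i, a (2 * j - 1) ∧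
      ∑ j ∈ Finset.Icc 1 i, a (2 * j - 1) ≤ U) :
    ∀ i, 1 ≤ i → i ≤ m →
      C (2 * i) = ((i : ℝ) - 1) * U + ∑ j ∈ Finset.Icc 1 i, a (2 * j - 1) ∧
      C (2 * i + 1) = (i : ℝ) * U + ∑ j ∈ Finset.Icc 1 i, a (2 * j) := by
  intro i hi him
  have hm : 1 ≤ m := hi.trans him
  have hC2' : C 2 = a 1 := by simpa [hC2, hs1] using hseven 1 le_rfl hm
  refine two_machine_closed_form U (fun j => a (2 * j - 1)) (fun j => a (2 * j))
    (fun j => C (2 * j)) (fun j => C (2 * j + 1)) m (fun j => ha _) hC2' ?_ ?_ ?_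
    hpartial i hi him
  · have h3 := hrec 3 (by norm_num) (by omega)
    have ha1 : a 1 ≤ U := by simpa using (hpartial 1 le_rfl hm).2
    simpa [hC1, hC2', hs1, hsodd 1 le_rfl hm, max_eq_left ha1] using h3
  · intro j hj hjm
    have h := hrec (2 * (j + 1)) (by omega) (by omega)
    rwa [show 2 * (j + 1) - 2 = 2 * j by omega, show 2 * (j + 1) - 1 = 2 * j + 1 by omega,
      hseven (j + 1) (by omega) hjm] at h
  · intro j hj hjm
    have h := hrec (2 * (j + 1) + 1) (by omega) (by omega)
    rwa [show 2 * (j + 1) + 1 - 2 = 2 * j + 1 by omega,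
      show 2 * (j + 1) + 1 - 1 = 2 * (j + 1) by omega, hsodd (j + 1) (by omega) hjm] at h

theorem stmt_7 (m : ℕ) (hm : 1 ≤ m) (U : ℝ) (hU : 1 ≤ U)
    (a : ℕ → ℝ) (ha : ∀ j, 0 ≤ a j) (s : ℕ → ℝ) (C : ℕ → ℝ)
    (hs1 : s 1 = 0)
    (hseven : ∀ i, 1 ≤ i → i ≤ m → s (2 * i) = a (2 * i - 1))
    (hsodd : ∀ i, 1 ≤ i → i ≤ m → s (2 * i + 1) = a (2 * i))
    (hC1 : C 1 = s 1) (hC2 : C 2 = s 1 + s 2)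
    (hrec : ∀ i, 2 < i → i ≤ 2 * m + 1 → C i = max (C (i - 2) + U) (C (i - 1)) + s i)
    (hpartial : ∀ i, 1 ≤ i → i ≤ m →
      ∑ j ∈ Finset.Icc 1 i, a (2 * j) ≤ ∑ j ∈ Finset.Icc 1 i, a (2 * j - 1) ∧
      ∑ j ∈ Finset.Icc 1 i, a (2 * j - 1) ≤ U) :
    ∀ i, 1 ≤ i → i ≤ m →
      C (2 * i) = ((i : ℝ) - 1) * U + ∑ j ∈ Finset.Icc 1 i, a (2 * j - 1) ∧
      C (2 * i + 1) = (i : ℝ) * U + ∑ j ∈ Finset.Icc 1 i, a (2 * j) :=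
  stmt_7_general m U a ha s C hs1 hseven hsodd hC1 hC2 hrec hpartial
end

section
/- Let a_1, …, a_{2m} be positive integers admitting a partition into two m-element subsets of equal sum U = (1/2)∑ a_j. Then there exists an ordering a_{[1]}, …, a_{[2m]} such that {a_{[2j-1]}} and {a_{[2j]}} are the two subsets, a_{[1]} ≥ a_{[3]} ≥ ⋯ ≥ a_{[2m-1]}, a_{[2]} ≤ a_{[4]} ≤ ⋯ ≤ a_{[2m]}, and for every 1 ≤ i ≤ m: ∑_{j=1}^i a_{[2j]} ≤ ∑_{j=1}^i a_{[2j-1]}. -/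
/-!
Sort `P` nonincreasingly and its complement nondecreasingly by `a`, and interleave the two
sortings. For the partial sums use the averaging inequality (Lemma 2.3): the first `i` terms of a
nonincreasing sequence of length `m` sum to at least `i / m` of its total, those of a nondecreasing
one to at most `i / m` of its total, and both totals equal `U`.
-/

open Finset

section Averaging

variable {R : Type*} [CommRing R] [LinearOrder R] [IsStrictOrderedRing R]

theorem card_nsmul_sum_le_card_nsmul_sum {M ι : Type*} [AddCommMonoid M] [PartialOrder M]
    [IsOrderedAddMonoid M] {A B : Finset ι} {f : ι → M} (h : ∀ j ∈ A, ∀ k ∈ B, f j ≤ f k) :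
    #B • ∑ j ∈ A, f j ≤ #A • ∑ k ∈ B, f k :=
  calc #B • ∑ j ∈ A, f j = ∑ j ∈ A, ∑ _k ∈ B, f j := by simp only [sum_const, sum_nsmul]
    _ ≤ ∑ j ∈ A, ∑ k ∈ B, f k := sum_le_sum fun j hj => sum_le_sum fun k hk => h j hj k hk
    _ = #A • ∑ k ∈ B, f k := by rw [sum_comm]; simp only [sum_const, sum_nsmul]

theorem MonotoneOn.mul_sum_Icc_le {f : ℕ → R} {n i : ℕ} (hf : MonotoneOn f (Set.Icc 1 n))
    (hi : i ≤ n) : n * ∑ j ∈ Icc 1 i, f j ≤ i * ∑ j ∈ Icc 1 n, f j := by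
  have hsplit : ∑ j ∈ Icc 1 i, f j + ∑ j ∈ Ioc i n, f j = ∑ j ∈ Icc 1 n, f j :=
    sum_Ioc_consecutive f (Nat.zero_le i) hi
  have hcross := card_nsmul_sum_le_card_nsmul_sum (A := Icc 1 i) (B := Ioc i n) (f := f)
    fun j hj k hk => by
      simp only [mem_Icc, mem_Ioc] at hj hk
      exact hf ⟨hj.1, by omega⟩ ⟨by omega, hk.2⟩ (by omega)
  simp only [Nat.card_Icc, Nat.card_Ioc, nsmul_eq_mul, Nat.add_sub_cancel] at hcross
  rw [← hsplit, Nat.cast_sub hi] at *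
  linear_combination hcross

theorem AntitoneOn.mul_sum_Icc_le {f : ℕ → R} {n i : ℕ} (hf : AntitoneOn f (Set.Icc 1 n))
    (hi : i ≤ n) : i * ∑ j ∈ Icc 1 n, f j ≤ n * ∑ j ∈ Icc 1 i, f j := by
  simpa only [sum_neg_distrib, mul_neg, neg_le_neg_iff] using hf.neg.mul_sum_Icc_le hi

theorem sum_Icc_le_sum_Icc_of_monotoneOn_of_antitoneOn {f g : ℕ → R} {n i : ℕ}
    (hg : MonotoneOn g (Set.Icc 1 n)) (hf : AntitoneOn f (Set.Icc 1 n))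
    (hsum : ∑ j ∈ Icc 1 n, g j = ∑ j ∈ Icc 1 n, f j) (hi : i ≤ n) :
    ∑ j ∈ Icc 1 i, g j ≤ ∑ j ∈ Icc 1 i, f j := by
  rcases Nat.eq_zero_or_pos n with rfl | hn
  · obtain rfl : i = 0 := by omega
    simp
  refine le_of_mul_le_mul_left ?_ (Nat.cast_pos.mpr hn : (0 : R) < n)
  calc n * ∑ j ∈ Icc 1 i, g j ≤ i * ∑ j ∈ Icc 1 n, g j := hg.mul_sum_Icc_le hi
    _ = i * ∑ j ∈ Icc 1 n, f j := by rw [hsum]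
    _ ≤ n * ∑ j ∈ Icc 1 i, f j := hf.mul_sum_Icc_le hi

end Averaging

theorem List.Nodup.bijOn_getD_sub_one {α : Type*} {l : List α} (hl : l.Nodup) (d : α) :
    Set.BijOn (fun j => l.getD (j - 1) d) (Set.Icc 1 l.length) {x | x ∈ l} := by
  refine ⟨fun j hj => ?_, fun j hj k hk hjk => ?_, fun x hx => ?_⟩
  · simp only [List.getD_eq_getElem _ _ (show j - 1 < l.length by grind)]
    exact List.getElem_mem _
  · simp only [List.getD_eq_getElem _ _ (show j - 1 < l.length by grind),
      List.getD_eq_getElem _ _ (show k - 1 < l.length by grind), hl.getElem_inj_iff] at hjk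
    grind
  · obtain ⟨k, hk, rfl⟩ := List.mem_iff_getElem.mp hx
    exact ⟨k + 1, ⟨by omega, by omega⟩, by simp [hk]⟩

theorem List.Pairwise.monotoneOn_getD_sub_one {α β : Type*} [Preorder β] {f : α → β}
    {l : List α} (hl : l.Pairwise (fun x y => f x ≤ f y)) (d : α) :
    MonotoneOn (fun j => f (l.getD (j - 1) d)) (Set.Icc 1 l.length) := by
  intro j hj k hk hjk
  simp only [List.getD_eq_getElem _ _ (show j - 1 < l.length by grind),
    List.getD_eq_getElem _ _ (show k - 1 < l.length by grind)]
  rcases hjk.lt_or_eq with hjk | rfl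
  · exact List.pairwise_iff_getElem.mp hl _ _ _ _ (by grind)
  · rfl

theorem Finset.exists_bijOn_Icc_monotoneOn {α β : Type*} [Nonempty α] [LinearOrder β]
    (s : Finset α) (f : α → β) :
    ∃ p : ℕ → α, Set.BijOn p (Set.Icc 1 #s) s ∧ MonotoneOn (f ∘ p) (Set.Icc 1 #s) := by
  set l := s.toList.mergeSort (fun x y => decide (f x ≤ f y))
  have hperm : l.Perm s.toList := List.mergeSort_perm _ _
  have hsorted : l.Pairwise (fun x y => f x ≤ f y) := by
    simpa using List.pairwise_mergeSort (le := fun x y => decide (f x ≤ f y))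
      (fun x y z hxy hyz => by simpa using (of_decide_eq_true hxy).trans (of_decide_eq_true hyz))
      (fun x y => by simpa using le_total (f x) (f y)) s.toList
  have hlen : l.length = #s := by rw [hperm.length_eq, length_toList]
  have hmem : {x | x ∈ l} = (s : Set α) := by ext; simp [hperm.mem_iff]
  obtain ⟨d⟩ := ‹Nonempty α›
  have hnodup : l.Nodup := hperm.nodup_iff.mpr s.nodup_toList
  exact ⟨fun j => l.getD (j - 1) d, hlen ▸ hmem ▸ hnodup.bijOn_getD_sub_one d,
    hlen ▸ hsorted.monotoneOn_getD_sub_one d⟩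

theorem Set.BijOn.finsetSum_comp {ι κ M : Type*} [AddCommMonoid M] {s : Finset ι} {t : Finset κ}
    {e : ι → κ} (he : Set.BijOn e s t) (f : κ → M) : ∑ i ∈ s, f (e i) = ∑ j ∈ t, f j :=
  sum_nbij e he.mapsTo he.injOn he.surjOn fun _ _ => rfl

/-- The sequence `p 1, q 1, p 2, q 2, …`, indexed from `n = 1`. -/
def interleave {α : Type*} (p q : ℕ → α) (n : ℕ) : α :=
  if n % 2 = 1 then p ((n + 1) / 2) else q (n / 2)

section Interleave

variable {α : Type*} {p q : ℕ → α}

theorem interleave_two_mul_sub_one {j : ℕ} (hj : 1 ≤ j) : interleave p q (2 * j - 1) = p j := by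
  simp only [interleave, show (2 * j - 1) % 2 = 1 by omega, if_true,
    show (2 * j - 1 + 1) / 2 = j by omega]

@[simp]
theorem interleave_two_mul (j : ℕ) : interleave p q (2 * j) = q j := by
  simp [interleave]

theorem bijOn_interleave {m : ℕ} {s t : Set α} (hp : Set.BijOn p (Set.Icc 1 m) s)
    (hq : Set.BijOn q (Set.Icc 1 m) t) (hst : Disjoint s t) :
    Set.BijOn (interleave p q) (Set.Icc 1 (2 * m)) (s ∪ t) := by
  have hcases : ∀ n ∈ Set.Icc 1 (2 * m), ∃ j ∈ Set.Icc 1 m, n = 2 * j - 1 ∨ n = 2 * j := by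
    rintro n ⟨h1, h2⟩
    exact ⟨(n + 1) / 2, ⟨by omega, by omega⟩, by omega⟩
  refine ⟨fun n hn => ?_, fun n hn n' hn' heq => ?_, fun x hx => ?_⟩
  · obtain ⟨j, hj, rfl | rfl⟩ := hcases n hn
    · rw [interleave_two_mul_sub_one hj.1]; exact Or.inl (hp.mapsTo hj)
    · rw [interleave_two_mul]; exact Or.inr (hq.mapsTo hj)
  · obtain ⟨j, hj, rfl | rfl⟩ := hcases n hn <;> obtain ⟨j', hj', rfl | rfl⟩ := hcases n' hn' <;>
      simp only [interleave_two_mul_sub_one hj.1, interleave_two_mul_sub_one hj'.1,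
        interleave_two_mul] at heq
    · rw [hp.injOn hj hj' heq]
    · exact (hst.ne_of_mem (hp.mapsTo hj) (hq.mapsTo hj') heq).elim
    · exact (hst.ne_of_mem (hp.mapsTo hj') (hq.mapsTo hj) heq.symm).elim
    · rw [hq.injOn hj hj' heq]
  · rcases hx with hx | hx
    · obtain ⟨j, hj, rfl⟩ := hp.surjOn hx
      exact ⟨2 * j - 1, ⟨by grind, by grind⟩, interleave_two_mul_sub_one hj.1⟩
    · obtain ⟨j, hj, rfl⟩ := hq.surjOn hx
      exact ⟨2 * j, ⟨by grind, by grind⟩, interleave_two_mul j⟩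

end Interleave

theorem stmt_14_general (m : ℕ) (U : ℤ) (a : ℕ → ℤ)
    (hsum : ∑ j ∈ Finset.Icc 1 (2 * m), a j = 2 * U)
    (P : Finset ℕ) (hP : P ⊆ Finset.Icc 1 (2 * m)) (hPcard : P.card = m)
    (hPsum : ∑ j ∈ P, a j = U) :
    ∃ π : ℕ → ℕ, Set.BijOn π (Set.Icc 1 (2 * m)) (Set.Icc 1 (2 * m)) ∧
      Finset.image (fun j => π (2 * j - 1)) (Finset.Icc 1 m) = P ∧
      Finset.image (fun j => π (2 * j)) (Finset.Icc 1 m) = Finset.Icc 1 (2 * m) \ P ∧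
      (∀ j, 1 ≤ j → j < m → a (π (2 * (j + 1) - 1)) ≤ a (π (2 * j - 1))) ∧
      (∀ j, 1 ≤ j → j < m → a (π (2 * j)) ≤ a (π (2 * (j + 1)))) ∧
      (∀ i, 1 ≤ i → i ≤ m →
        ∑ j ∈ Finset.Icc 1 i, a (π (2 * j)) ≤ ∑ j ∈ Finset.Icc 1 i, a (π (2 * j - 1))) := by
  classical
  set Q := Finset.Icc 1 (2 * m) \ P
  have hQcard : #Q = m := by simp only [Q, card_sdiff_of_subset hP, Nat.card_Icc, hPcard]; omega
  have hQsum : ∑ j ∈ Q, a j = U := by linarith [sum_sdiff (f := a) hP]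
  obtain ⟨p, hp, hpa⟩ := P.exists_bijOn_Icc_monotoneOn (OrderDual.toDual ∘ a)
  obtain ⟨q, hq, hqa⟩ := Q.exists_bijOn_Icc_monotoneOn a
  rw [hPcard, Function.comp_assoc, monotoneOn_toDual_comp_iff] at hpa
  rw [hPcard] at hp
  rw [hQcard] at hq hqa
  have hodd : Set.EqOn (fun j => interleave p q (2 * j - 1)) p (Set.Icc 1 m) :=
    fun j hj => interleave_two_mul_sub_one hj.1
  have hpq : ∑ j ∈ Icc 1 m, a (q j) = ∑ j ∈ Icc 1 m, a (p j) := by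
    rw [← coe_Icc] at hp hq
    rw [hq.finsetSum_comp, hp.finsetSum_comp, hPsum, hQsum]
  refine ⟨interleave p q, ?_, ?_, ?_, fun j hj hjm => ?_, fun j hj hjm => ?_, fun i _ him => ?_⟩
  · have := bijOn_interleave hp hq (disjoint_coe.mpr disjoint_sdiff)
    rwa [coe_sdiff, Set.union_sdiff_cancel (coe_subset.mpr hP), coe_Icc] at this
  · exact coe_injective (by simpa using (hodd.image_eq.trans hp.image_eq))
  · exact coe_injective (by simpa using hq.image_eq)
  · rw [interleave_two_mul_sub_one hj, interleave_two_mul_sub_one (by omega)]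
    exact hpa ⟨hj, hjm.le⟩ ⟨by omega, hjm⟩ (by omega)
  · simp only [interleave_two_mul]
    exact hqa ⟨hj, hjm.le⟩ ⟨by omega, hjm⟩ (by omega)
  · simp only [interleave_two_mul]
    rw [sum_congr rfl fun j hj =>
      congrArg a (hodd ⟨(mem_Icc.mp hj).1, (mem_Icc.mp hj).2.trans him⟩)]
    exact sum_Icc_le_sum_Icc_of_monotoneOn_of_antitoneOn hqa hpa hpq him

theorem stmt_14 (m : ℕ) (hm : 1 ≤ m) (U : ℤ) (a : ℕ → ℤ)
    (hpos : ∀ j ∈ Finset.Icc 1 (2 * m), 0 < a j)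
    (hsum : ∑ j ∈ Finset.Icc 1 (2 * m), a j = 2 * U)
    (P : Finset ℕ) (hP : P ⊆ Finset.Icc 1 (2 * m)) (hPcard : P.card = m)
    (hPsum : ∑ j ∈ P, a j = U) :
    ∃ π : ℕ → ℕ, Set.BijOn π (Set.Icc 1 (2 * m)) (Set.Icc 1 (2 * m)) ∧
      Finset.image (fun j => π (2 * j - 1)) (Finset.Icc 1 m) = P ∧
      Finset.image (fun j => π (2 * j)) (Finset.Icc 1 m) = Finset.Icc 1 (2 * m) \ P ∧
      (∀ j, 1 ≤ j → j < m → a (π (2 * (j + 1) - 1)) ≤ a (π (2 * j - 1))) ∧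
      (∀ j, 1 ≤ j → j < m → a (π (2 * j)) ≤ a (π (2 * (j + 1)))) ∧
      (∀ i, 1 ≤ i → i ≤ m →
        ∑ j ∈ Finset.Icc 1 i, a (π (2 * j)) ≤ ∑ j ∈ Finset.Icc 1 i, a (π (2 * j - 1))) :=
  stmt_14_general m U a hsum P hP hPcard hPsum
end
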